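/- For every f ∈ H^∞(B_{c₀}) and every u in the closed unit ball of ℓ_∞, the cluster sets coincide: Cl_{B_{c₀}}(f, u) = Cl_{𝔻_X}(f∘ι, u), where ι : X → c₀ is the map ι(x) = (e_j^*(x))_{j≥1} and f∘ι ∈ H^∞(𝔻_X). -/

import Mathlib

/-!
A net in `𝔻_X` is carried by `ι` to a net in `B_{c₀}` with the same coordinates, because an
element of `c₀` whose entries all have modulus `< 1` has sup norm `< 1` (the sup is attained).
Conversely, a net `z_α` in `B_{c₀}` is replaced by the truncations
`x_{α,n} = ∑_{j<n} z_α(j) e_j ∈ 𝔻_X` along the iterated filter (first `α`, then `n → ∞`):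
for fixed `α`, `ι x_{α,n} → z_α` in norm, so `f (ι x_{α,n}) → f z_α` by continuity of `f`, and
the pairings of `x_{α,n}` with `a ∈ ℓ₁` are the partial sums of `∑ a_j z_α(j)`.
-/

open Filter Topology Metric
open scoped ZeroAtInfty

noncomputable section

structure SchauderBasis' (X : Type*) [NormedAddCommGroup X] [NormedSpace ℂ X] where
  e : ℕ → X
  coord : ℕ → X →L[ℂ] ℂ
  norm_e : ∀ j, ‖e j‖ = 1
  coord_e : ∀ i j, coord i (e j) = if i = j then 1 else 0
  coord_bdd : ∃ C : ℝ, ∀ j, ‖coord j‖ ≤ C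
  expand : ∀ x : X,
    Tendsto (fun n => ∑ j ∈ Finset.range n, coord j x • e j) atTop (nhds x)

def polydisk {X : Type*} [NormedAddCommGroup X] [NormedSpace ℂ X]
    (B : SchauderBasis' X) (r : ℕ → ℝ) : Set X :=
  {x | ∀ j, ‖B.coord j x‖ < r j}

/-- The cluster set `Cl_{B_{c₀}}(f, u)`: all limits of `f` along nets in the open unit ball
of `c₀` converging weak-star (against `ℓ₁`) to `u ∈ ℓ_∞`. -/
def clusterSetC0 (f : C₀(ℕ, ℂ) → ℂ) (u : ℕ → ℂ) : Set ℂ :=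
  {lam | ∃ (ι : Type) (l : Filter ι) (x : ι → C₀(ℕ, ℂ)), l.NeBot ∧
    (∀ i, x i ∈ ball (0 : C₀(ℕ, ℂ)) 1) ∧
    (∀ a : lp (fun _ : ℕ => ℂ) 1,
      Tendsto (fun i => ∑' j, a j * x i j) l (nhds (∑' j, a j * u j))) ∧
    Tendsto (fun i => f (x i)) l (nhds lam)}

/-- The cluster set `Cl_{𝔻_X}(g, u)`: all limits of `g` along nets in `𝔻_X` whose coordinate
functionals converge weak-star (against `ℓ₁`) to `u ∈ ℓ_∞`. -/
def clusterSetDX {X : Type*} [NormedAddCommGroup X] [NormedSpace ℂ X]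
    (B : SchauderBasis' X) (g : X → ℂ) (u : ℕ → ℂ) : Set ℂ :=
  {lam | ∃ (ι : Type) (l : Filter ι) (x : ι → X), l.NeBot ∧
    (∀ i, x i ∈ polydisk B (fun _ => 1)) ∧
    (∀ a : lp (fun _ : ℕ => ℂ) 1,
      Tendsto (fun i => ∑' j, a j * B.coord j (x i)) l (nhds (∑' j, a j * u j))) ∧
    Tendsto (fun i => g (x i)) l (nhds lam)}


theorem Filter.curry_neBot {α β : Type*} {la : Filter α} {lb : Filter β} [la.NeBot] [lb.NeBot] :
    (la.curry lb).NeBot := by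
  simp only [← frequently_true_iff_neBot, frequently_curry_iff, frequently_const]

theorem Filter.Tendsto.curry_nhds {α β γ : Type*} [TopologicalSpace γ] {f : α → β → γ}
    {g : α → γ} {c : γ} {la : Filter α} {lb : Filter β}
    (hf : ∀ᶠ a in la, Tendsto (f a) lb (𝓝 (g a))) (hg : Tendsto g la (𝓝 c)) :
    Tendsto ↿f (la.curry lb) (𝓝 c) := fun _ hU =>
  (hf.and (hg (interior_mem_nhds.2 hU))).mono fun _ ⟨ha, hga⟩ =>
    ha (mem_interior_iff_mem_nhds.1 hga)

theorem lp.summable_mul_of_norm_le {α R : Type*} [NormedRing R] [CompleteSpace R]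
    (a : lp (fun _ : α => R) 1) {b : α → R} {C : ℝ} (hb : ∀ j, ‖b j‖ ≤ C) :
    Summable fun j => a j * b j := by
  have ha : Summable fun j => ‖a j‖ := by simpa using (lp.memℓp a).summable (by norm_num)
  refine Summable.of_norm_bounded (ha.mul_right C) fun j => ?_
  exact (norm_mul_le _ _).trans (mul_le_mul_of_nonneg_left (hb j) (norm_nonneg _))

namespace ZeroAtInftyContinuousMap

variable {α β : Type*} [TopologicalSpace α] [SeminormedAddCommGroup β]

theorem norm_apply_le (f : C₀(α, β)) (x : α) : ‖f x‖ ≤ ‖f‖ :=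
  norm_toBCF_eq_norm (f := f) ▸ f.toBCF.norm_coe_le_norm x

theorem norm_lt_of_forall_norm_apply_lt (f : C₀(α, β)) {r : ℝ} (hr : 0 < r)
    (h : ∀ x, ‖f x‖ < r) : ‖f‖ < r := by
  obtain ⟨c, hcr, hc0, hc⟩ : ∃ c < r, 0 ≤ c ∧ ∀ x, ‖f x‖ ≤ c := by
    by_cases h0 : ∃ x₀, 0 < ‖f x₀‖
    · obtain ⟨x₀, hx₀⟩ := h0
      have hlim : Tendsto (fun x => ‖f x‖) (cocompact α) (𝓝 0) := by
        simpa using (zero_at_infty f).norm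
      obtain ⟨x₁, hx₁⟩ := f.continuous.norm.exists_forall_ge' x₀
        ((hlim.eventually_lt_const hx₀).mono fun _ => le_of_lt)
      exact ⟨_, h x₁, norm_nonneg _, hx₁⟩
    · simp only [not_exists, not_lt] at h0
      exact ⟨0, hr, le_rfl, h0⟩
  rw [← norm_toBCF_eq_norm]
  exact ((BoundedContinuousFunction.norm_le hc0).2 hc).trans_lt hcr

theorem tendsto_of_eq_truncation {E : Type*} [SeminormedAddCommGroup E] (z : C₀(ℕ, E))
    {y : ℕ → C₀(ℕ, E)} (hy : ∀ n j, y n j = if j < n then z j else 0) :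
    Tendsto y atTop (𝓝 z) := by
  rw [tendsto_iff_tendstoUniformly, Metric.tendstoUniformly_iff]
  intro ε hε
  have hz := (zero_at_infty z).norm.eventually_lt_const (by simpa using hε)
  rw [cocompact_eq_atTop] at hz
  obtain ⟨N, hN⟩ := eventually_atTop.1 hz
  filter_upwards [eventually_ge_atTop N] with n hn j
  rw [hy]
  split_ifs with hj
  · simpa using hε
  · simpa using hN j (hn.trans (not_lt.1 hj))

end ZeroAtInftyContinuousMap

theorem SchauderBasis'.coord_sum_range_smul_e {X : Type*} [NormedAddCommGroup X]
    [NormedSpace ℂ X] (B : SchauderBasis' X) (c : ℕ → ℂ) (n i : ℕ) :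
    B.coord i (∑ j ∈ Finset.range n, c j • B.e j) = if i < n then c i else 0 := by
  simp [B.coord_e]

theorem tsum_mul_ite_lt {R : Type*} [NonUnitalNonAssocSemiring R] [TopologicalSpace R]
    (a b : ℕ → R) (n : ℕ) :
    ∑' j, a j * (if j < n then b j else 0) = ∑ j ∈ Finset.range n, a j * b j := by
  rw [tsum_eq_sum (s := Finset.range n) (fun j hj => by simp_all)]
  exact Finset.sum_congr rfl fun j hj => by simp_all

section ClusterSets

variable {X : Type*} [NormedAddCommGroup X] [NormedSpace ℂ X] (B : SchauderBasis' X)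
  {ι : X → C₀(ℕ, ℂ)} (f : C₀(ℕ, ℂ) → ℂ) (u : ℕ → ℂ)

theorem clusterSetDX_comp_subset_clusterSetC0 (hι : ∀ x j, ι x j = B.coord j x) :
    clusterSetDX B (f ∘ ι) u ⊆ clusterSetC0 f u := by
  rintro lam ⟨I, l, x, hl, hx, hxu, hfx⟩
  refine ⟨I, l, ι ∘ x, hl, fun i => ?_, fun a => ?_, hfx⟩
  · rw [mem_ball_zero_iff]
    exact (ι (x i)).norm_lt_of_forall_norm_apply_lt one_pos fun j => hι _ j ▸ hx i j
  · simpa only [Function.comp_apply, hι] using hxu a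

theorem clusterSetC0_subset_clusterSetDX_comp (hι : ∀ x j, ι x j = B.coord j x)
    (hf : ContinuousOn f (ball 0 1)) :
    clusterSetC0 f u ⊆ clusterSetDX B (f ∘ ι) u := by
  rintro lam ⟨I, l, z, hl, hz, hzu, hfz⟩
  have hz1 : ∀ α j, ‖z α j‖ < 1 := fun α j =>
    ((z α).norm_apply_le j).trans_lt (mem_ball_zero_iff.1 (hz α))
  let x : I × ℕ → X := fun p => ∑ j ∈ Finset.range p.2, z p.1 j • B.e j
  have hx : ∀ α n j, B.coord j (x (α, n)) = if j < n then z α j else 0 := fun α n j =>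
    B.coord_sum_range_smul_e _ n j
  refine ⟨I × ℕ, l.curry atTop, x, curry_neBot, ?_, fun a => ?_, ?_⟩
  · rintro ⟨α, n⟩ j
    rw [hx]
    split_ifs
    · exact hz1 α j
    · simp
  · have hpartial (α : I) : Tendsto (fun n => ∑' j, a j * B.coord j (x (α, n))) atTop
        (𝓝 (∑' j, a j * z α j)) := by
      simp only [hx, tsum_mul_ite_lt]
      exact (lp.summable_mul_of_norm_le a fun j => (hz1 α j).le).hasSum.tendsto_sum_nat
    exact Tendsto.curry_nhds (.of_forall hpartial) (hzu a)
  · have htrunc (α : I) : Tendsto (fun n => f (ι (x (α, n)))) atTop (𝓝 (f (z α))) :=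
      (hf.continuousAt (isOpen_ball.mem_nhds (hz α))).tendsto.comp
        ((z α).tendsto_of_eq_truncation fun n j => (hι _ j).trans (hx α n j))
    exact Tendsto.curry_nhds (.of_forall htrunc) hfz

end ClusterSets

theorem stmt8_general {X : Type*} [NormedAddCommGroup X] [NormedSpace ℂ X]
    (B : SchauderBasis' X) (ι : X → C₀(ℕ, ℂ)) (hι : ∀ (x : X) (j : ℕ), ι x j = B.coord j x)
    (f : C₀(ℕ, ℂ) → ℂ) (hf : DifferentiableOn ℂ f (ball 0 1))
    (u : ℕ → ℂ) :
    clusterSetC0 f u = clusterSetDX B (f ∘ ι) u :=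
  (clusterSetC0_subset_clusterSetDX_comp B f u hι hf.continuousOn).antisymm
    (clusterSetDX_comp_subset_clusterSetC0 B f u hι)

/-- for `f ∈ H^∞(B_{c₀})` and `u` in the closed unit ball of `ℓ_∞`,
`Cl_{B_{c₀}}(f, u) = Cl_{𝔻_X}(f ∘ ι, u)` where `ι(x) = (e_j^*(x))_j`. -/
theorem stmt8 {X : Type*} [NormedAddCommGroup X] [NormedSpace ℂ X] [CompleteSpace X]
    (B : SchauderBasis' X) (ι : X → C₀(ℕ, ℂ)) (hι : ∀ (x : X) (j : ℕ), ι x j = B.coord j x)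
    (f : C₀(ℕ, ℂ) → ℂ) (hf : DifferentiableOn ℂ f (ball 0 1))
    (hfb : ∃ M : ℝ, ∀ z ∈ ball (0 : C₀(ℕ, ℂ)) 1, ‖f z‖ ≤ M)
    (u : ℕ → ℂ) (hu : ∀ j, ‖u j‖ ≤ 1) :
    clusterSetC0 f u = clusterSetDX B (f ∘ ι) u :=
  stmt8_general B ι hι f hf u
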